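/- Equivalence of walks on the hexagonal lattice (Theorem 3a): if σ_M(p) = (-1)^{d(p)} σ_R(p) for every site p, where d(p) is the graph distance from p to the origin in the hexagonal lattice, then the flipping mirror walk on σ_M and the flipping rotator walk on σ_R, both starting at the origin with velocity v_k for k even (k ∈ {0,2,4}), have identical position sequences for all t ∈ ℕ. -/

import Mathlib

/-- The six unit velocities v_k = (cos(kπ/3), sin(kπ/3)), written in
coordinates with respect to the basis (1,0) and (1/2, √3/2) of the triangular
lattice containing the hexagonal lattice. -/
def hexVel (k : ZMod 6) : ℤ × ℤ :=
  if k = 0 then (1, 0) else if k = 1 then (0, 1) else if k = 2 then (-1, 1)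
  else if k = 3 then (-1, 0) else if k = 4 then (0, -1) else (1, -1)

/-- The mirror scattering rule M on ℍ² (Table 3). -/
def hexM (k : ZMod 6) (σ : ℤ) : ZMod 6 :=
  if σ = 1 then
    (if k = 0 then 5 else if k = 1 then 2 else if k = 2 then 1
     else if k = 3 then 4 else if k = 4 then 3 else 0)
  else
    (if k = 0 then 1 else if k = 1 then 0 else if k = 2 then 3
     else if k = 3 then 2 else if k = 4 then 5 else 4)

/-- The rotator scattering rule R on ℍ²: k ↦ (k - σ) mod 6. -/
def hexR (k : ZMod 6) (σ : ℤ) : ZMod 6 := k - (σ : ZMod 6)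

/-- State of a walk on ℍ²: position (in coordinates of the ambient triangular
lattice), velocity index, environment of scatterers. -/
structure HexState where
  pos : ℤ × ℤ
  vel : ZMod 6
  env : ℤ × ℤ → ℤ

/-- One step of the flipping dynamics with scattering rule `f`. -/
def hexStep (f : ZMod 6 → ℤ → ZMod 6) (s : HexState) : HexState :=
  let k' := f s.vel (s.env s.pos)
  { pos := s.pos + hexVel k', vel := k',
    env := fun q => if q = s.pos then -s.env s.pos else s.env q }

/-- The walk: state after `t` time steps. -/
def hexWalk (f : ZMod 6 → ℤ → ZMod 6) (s₀ : HexState) (t : ℕ) : HexState :=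
  (hexStep f)^[t] s₀

/-- The class of a triangular-lattice point: (x - y) mod 3.  The hexagonal
sublattice visited by a walker consists of two of the three classes. -/
def triClass (p : ℤ × ℤ) : ZMod 3 := ((p.1 - p.2 : ℤ) : ZMod 3)

lemma hexVel_ne_zero : ∀ k : ZMod 6, hexVel k ≠ 0 := by decide

/-- Adjacency of the hexagonal lattice visited by walks with even-index initial
velocity: sites of class 0 are joined to their three neighbors in the
odd-indexed directions (and symmetrically). -/
def hexAdjE (p q : ℤ × ℤ) : Prop :=
  (triClass p = 0 ∧ ∃ k : ZMod 6, Odd k.val ∧ q = p + hexVel k) ∨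
  (triClass q = 0 ∧ ∃ k : ZMod 6, Odd k.val ∧ p = q + hexVel k)

/-- The hexagonal lattice (for even-index initial velocities) as a graph. -/
def hexGraphE : SimpleGraph (ℤ × ℤ) where
  Adj := hexAdjE
  symm := ⟨fun p q h => Or.symm h⟩
  loopless := ⟨by
    intro p h
    rcases h with ⟨-, k, -, hk⟩ | ⟨-, k, -, hk⟩ <;>
      exact hexVel_ne_zero k (left_eq_add.mp hk)⟩

/-- Graph distance to the origin in the hexagonal lattice (even case). -/
noncomputable def hexDistE (p : ℤ × ℤ) : ℕ := hexGraphE.dist 0 p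

/-!
The class is a proper 2-colouring of ℍ², so a site reachable from the origin has class 0 exactly
when its distance d is even. A walker started at the origin with an even velocity index is on a
class-0 site exactly when its velocity index is even. Table 3 satisfies M(k, (-1)^k σ) = R(k, σ),
so on environments coupled by σ_M = (-1)^d σ_R the mirror walker makes the same move as the
rotator walker; both then flip the scatterer at the same site, which preserves the coupling.
-/

lemma triClass_add (p q : ℤ × ℤ) : triClass (p + q) = triClass p + triClass q := by
  simp only [triClass, Prod.fst_add, Prod.snd_add]
  push_cast
  ring

lemma triClass_zero : triClass 0 = 0 := rfl

lemma triClass_hexVel (k : ZMod 6) : triClass (hexVel k) = if Even k.val then 1 else 2 := by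
  revert k; decide

lemma hexVel_add_three (k : ZMod 6) : hexVel (k + 3) = -hexVel k := by
  revert k; decide

lemma odd_val_add_three {k : ZMod 6} (hk : Even k.val) : Odd (k + 3).val := by
  revert k; decide

lemma even_val_hexR_iff {σ : ℤ} (hσ : σ = 1 ∨ σ = -1) (k : ZMod 6) :
    Even (hexR k σ).val ↔ ¬Even k.val := by
  rcases hσ with rfl | rfl <;> revert k <;> decide

lemma hexM_eq_hexR {σ : ℤ} (hσ : σ = 1 ∨ σ = -1) (k : ZMod 6) :
    hexM k ((if Even k.val then 1 else -1) * σ) = hexR k σ := by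
  rcases hσ with rfl | rfl <;> revert k <;> decide

lemma hexGraphE_adj_add_hexVel {p : ℤ × ℤ} {k : ZMod 6}
    (hp : triClass p = if Even k.val then 2 else 0) : hexGraphE.Adj p (p + hexVel k) := by
  by_cases hk : Even k.val
  · rw [if_pos hk] at hp
    refine Or.inr ⟨?_, k + 3, odd_val_add_three hk, ?_⟩
    · rw [triClass_add, triClass_hexVel, if_pos hk, hp]; decide
    · rw [hexVel_add_three, add_neg_cancel_right]
  · rw [if_neg hk] at hp
    exact Or.inl ⟨hp, k, Nat.not_even_iff_odd.mp hk, rfl⟩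

lemma triClass_of_hexGraphE_adj {p q : ℤ × ℤ} (h : hexGraphE.Adj p q) :
    (triClass p = 0 ∧ triClass q = 2) ∨ (triClass p = 2 ∧ triClass q = 0) := by
  rcases h with ⟨h0, k, hk, rfl⟩ | ⟨h0, k, hk, rfl⟩ <;>
    rw [triClass_add, triClass_hexVel, if_neg (Nat.not_even_iff_odd.mpr hk), h0] <;> decide

def hexGraphE.bicoloring : hexGraphE.Coloring Bool :=
  SimpleGraph.Coloring.mk (fun p => decide (triClass p = 0)) fun h => by
    rcases triClass_of_hexGraphE_adj h with ⟨hp, hq⟩ | ⟨hp, hq⟩ <;> simp [hp, hq] <;> decide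

lemma neg_one_pow_hexDistE {p : ℤ × ℤ} (hp : hexGraphE.Reachable 0 p) :
    (-1 : ℤ) ^ hexDistE p = if triClass p = 0 then 1 else -1 := by
  obtain ⟨w, hw⟩ := hp.exists_walk_length_eq_dist
  have hpar : Even (hexDistE p) ↔ triClass p = 0 := by
    rw [hexDistE, ← hw, hexGraphE.bicoloring.even_length_iff_congr w]
    change (decide (triClass 0 = 0) = true ↔ decide (triClass p = 0) = true) ↔ _
    simp [triClass_zero]
  split_ifs with h
  · exact (hpar.2 h).neg_one_pow
  · exact (Nat.not_even_iff_odd.1 (mt hpar.1 h)).neg_one_pow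

structure HexState.Admissible (s : HexState) : Prop where
  reachable : hexGraphE.Reachable 0 s.pos
  triClass_pos : triClass s.pos = if Even s.vel.val then 0 else 2
  env_sign : ∀ q, s.env q = 1 ∨ s.env q = -1

namespace HexState.Admissible

variable {s : HexState} (hs : s.Admissible)
include hs

lemma triClass_pos_mem : triClass s.pos = 0 ∨ triClass s.pos = 2 := by
  rw [hs.triClass_pos]; split_ifs <;> simp

lemma neg_one_pow_hexDistE_pos :
    (-1 : ℤ) ^ hexDistE s.pos = if Even s.vel.val then 1 else -1 := by
  have h20 : (2 : ZMod 3) ≠ 0 := by decide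
  rw [neg_one_pow_hexDistE hs.reachable, hs.triClass_pos]
  by_cases hv : Even s.vel.val <;> simp [hv, h20]

lemma hexStep_hexR : (hexStep hexR s).Admissible := by
  set k := hexR s.vel (s.env s.pos)
  have hflip : Even k.val ↔ ¬Even s.vel.val := even_val_hexR_iff (hs.env_sign s.pos) s.vel
  have hcls : triClass s.pos = if Even k.val then 2 else 0 := by
    rw [hs.triClass_pos]; by_cases hv : Even s.vel.val <;> simp [hv, hflip]
  refine ⟨hs.reachable.trans (hexGraphE_adj_add_hexVel hcls).reachable, ?_, fun q => ?_⟩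
  · change triClass (s.pos + hexVel k) = if Even k.val then 0 else 2
    rw [triClass_add, triClass_hexVel, hcls]
    split_ifs <;> decide
  · simp only [hexStep]
    split_ifs
    · rcases hs.env_sign s.pos with h | h <;> simp [h]
    · exact hs.env_sign q

end HexState.Admissible

structure HexCoupled (sM sR : HexState) : Prop where
  pos_eq : sM.pos = sR.pos
  vel_eq : sM.vel = sR.vel
  env_eq : ∀ q, triClass q = 0 ∨ triClass q = 2 → sM.env q = (-1) ^ hexDistE q * sR.env q

lemma HexCoupled.step {sM sR : HexState} (h : HexCoupled sM sR) (hR : sR.Admissible) :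
    HexCoupled (hexStep hexM sM) (hexStep hexR sR) := by
  have hvel : hexM sM.vel (sM.env sM.pos) = hexR sR.vel (sR.env sR.pos) := by
    rw [h.pos_eq, h.vel_eq, h.env_eq _ hR.triClass_pos_mem, hR.neg_one_pow_hexDistE_pos,
      hexM_eq_hexR (hR.env_sign _)]
  refine ⟨by simp only [hexStep, hvel, ← h.pos_eq], by simp only [hexStep, hvel], fun q hq => ?_⟩
  simp only [hexStep, h.pos_eq]
  split_ifs with hqp
  · rw [hqp, h.env_eq _ (hqp ▸ hq), mul_neg]
  · exact h.env_eq q hq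

/-- Theorem 3a: if σ_M(p) = (-1)^{d(p)} σ_R(p) for every site p
of the hexagonal lattice (d = graph distance to the origin), then the flipping
mirror walk on σ_M and the flipping rotator walk on σ_R, both starting at the
origin with a velocity of even index, have identical positions at all times. -/
theorem hex_equivalence_even (σM σR : ℤ × ℤ → ℤ) (hσ : ∀ p, σR p = 1 ∨ σR p = -1)
    (hrel : ∀ p : ℤ × ℤ, triClass p = 0 ∨ triClass p = 2 →
      σM p = (-1) ^ hexDistE p * σR p)
    (k₀ : ZMod 6) (hk : Even k₀.val) (t : ℕ) :
    (hexWalk hexM ⟨0, k₀, σM⟩ t).pos = (hexWalk hexR ⟨0, k₀, σR⟩ t).pos := by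
  suffices h : (hexWalk hexR ⟨0, k₀, σR⟩ t).Admissible ∧
      HexCoupled (hexWalk hexM ⟨0, k₀, σM⟩ t) (hexWalk hexR ⟨0, k₀, σR⟩ t) from h.2.pos_eq
  induction t with
  | zero =>
    have hcls : triClass 0 = if Even k₀.val then 0 else 2 := by rw [if_pos hk, triClass_zero]
    exact ⟨⟨.refl 0, hcls, hσ⟩, ⟨rfl, rfl, hrel⟩⟩
  | succ t ih =>
    simp only [hexWalk, Function.iterate_succ_apply'] at ih ⊢
    exact ⟨ih.1.hexStep_hexR, ih.2.step ih.1⟩
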